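/- For a real parameter a > 0, let h(y) = y³+ay²−a⁴y−a⁵−(2/5)a⁴. There exist constants c > 0 and ε > 0 such that for all a with 0 < a < ε, any two distinct real zeroes y₁ ≠ y₂ of the quartic y·h(y) satisfy |y₁ − y₂| ≥ c·a^{3/2}. -/
import Mathlib


/-- `h(y) = y³+ay²−a⁴y−a⁵−(2/5)a⁴`. -/
noncomputable def hCubic (a y : ℝ) : ℝ :=
  y ^ 3 + a * y ^ 2 - a ^ 4 * y - a ^ 5 - (2 / 5) * a ^ 4

-- any root of hCubic has y^2 ≥ a^3/4
lemma root_big (a y : ℝ) (ha : 0 < a) (ha' : a < 1/200)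
    (hy : hCubic a y = 0) : a^3/4 ≤ y^2 := by
  by_contra hc
  push_neg at hc
  unfold hCubic at hy
  have h1 : y^2 < a^3/4 := hc
  have ha2 : a^3 < a^2/200 := by nlinarith
  nlinarith [sq_nonneg y, sq_nonneg (y - a), sq_nonneg (y + a), abs_nonneg y, sq_abs y,
    mul_pos ha ha, pow_pos ha 3, pow_pos ha 4, sq_nonneg (y*a)]

-- core separation for sums
lemma core (a s : ℝ) (ha : 0 < a) (ha' : a < 1/200)
    (hg : s^3 + 2*a*s^2 + (a^2 - a^4)*s + (2/5)*a^4 = 0)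
    (hD : 0 < -3*s^2 - 4*a*s + 4*a^4) :
    a^3/4 ≤ -3*s^2 - 4*a*s + 4*a^4 := by
  by_contra hc
  push_neg at hc
  rcases le_or_gt (-(a/2)) s with hs | hs
  · -- s ≥ -a/2 : show -a^2/8 ≤ s ≤ a^2/8 then g(s) > 0
    have hsu : s ≤ a^2/8 := by nlinarith [sq_nonneg s, sq_nonneg (s - a^2/8)]
    have hsl : -(a^2/8) ≤ s := by nlinarith [sq_nonneg s]
    nlinarith [sq_nonneg s, pow_pos ha 4, mul_pos ha ha, sq_nonneg (s*a)]
  · -- s < -a/2 : s near -4a/3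
    have hsl : -(4*a/3) - a^2 ≤ s := by nlinarith [sq_nonneg (s + 4*a/3 + a^2)]
    have hsu : s ≤ -(4*a/3) + a^2/6 := by nlinarith [sq_nonneg (s + 4*a/3)]
    nlinarith [sq_nonneg (s + 4*a/3), mul_pos ha ha, pow_pos ha 3, pow_pos ha 4,
      sq_nonneg (s + 4*a/3 + a^2), mul_nonneg (mul_nonneg ha.le ha.le) (sq_nonneg (s + 4*a/3))]

/-- There are constants `c > 0` and `ε > 0` such that for all `0 < a < ε`, any two distinct
real zeroes of the quartic `y·h(y)` differ by at least `c·a^{3/2}`. -/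
theorem stmt_16 :
    ∃ c : ℝ, 0 < c ∧ ∃ ε : ℝ, 0 < ε ∧ ∀ a : ℝ, 0 < a → a < ε →
      ∀ y₁ y₂ : ℝ, y₁ * hCubic a y₁ = 0 → y₂ * hCubic a y₂ = 0 → y₁ ≠ y₂ →
        c * a ^ ((3 : ℝ) / 2) ≤ |y₁ - y₂| := by
  refine ⟨1/2, by norm_num, 1/200, by norm_num, ?_⟩
  intro a ha haε y₁ y₂ h1 h2 hne
  set K : ℝ := a ^ ((3 : ℝ) / 2) with hKdef
  have hKpos : 0 < K := Real.rpow_pos_of_pos ha _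
  have hK2 : K^2 = a^3 := by
    rw [hKdef, ← Real.rpow_natCast (a ^ ((3:ℝ)/2)) 2, ← Real.rpow_mul ha.le,
      ← Real.rpow_natCast a 3]
    norm_num
  -- suffices squared inequality
  have key : a^3/4 ≤ (y₁ - y₂)^2 := by
    rcases mul_eq_zero.mp h1 with hz1 | hr1
    · rcases mul_eq_zero.mp h2 with hz2 | hr2
      · exact absurd (hz1.trans hz2.symm) hne
      · have := root_big a y₂ ha haε hr2
        calc a^3/4 ≤ y₂^2 := this
        _ = (y₁ - y₂)^2 := by rw [hz1]; ring
    · rcases mul_eq_zero.mp h2 with hz2 | hr2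
      · have := root_big a y₁ ha haε hr1
        calc a^3/4 ≤ y₁^2 := this
        _ = (y₁ - y₂)^2 := by rw [hz2]; ring
      · -- both roots of the cubic
        have hd : y₁ - y₂ ≠ 0 := sub_ne_zero.mpr hne
        unfold hCubic at hr1 hr2
        have hmul : (y₁ - y₂) * ((y₁+y₂)^2 + a*(y₁+y₂) - a^4 - y₁*y₂) = 0 := by
          linear_combination hr1 - hr2
        have hE : y₁*y₂ = (y₁+y₂)^2 + a*(y₁+y₂) - a^4 := by
          have := (mul_eq_zero.mp hmul).resolve_left hd
          linarith [this]
        have hg : (y₁+y₂)^3 + 2*a*(y₁+y₂)^2 + (a^2 - a^4)*(y₁+y₂) + (2/5)*a^4 = 0 := by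
          linear_combination (-1 : ℝ) * hr1 + (-a - 2*y₁ - y₂) * (hE - (by ring : ((y₁+y₂)^2 + a*(y₁+y₂) - a^4 : ℝ) = (y₁+y₂)^2 + a*(y₁+y₂) - a^4))
        have hDval : (y₁ - y₂)^2 = -3*(y₁+y₂)^2 - 4*a*(y₁+y₂) + 4*a^4 := by
          linear_combination (-4 : ℝ) * hE
        have hDpos : 0 < -3*(y₁+y₂)^2 - 4*a*(y₁+y₂) + 4*a^4 := by
          rw [← hDval]; positivity
        have := core a (y₁+y₂) ha haε hg hDpos
        rw [hDval]; exact this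
  have h1' : (1/2 * K)^2 ≤ (y₁ - y₂)^2 := by rw [mul_pow, hK2]; nlinarith
  calc 1/2 * K = Real.sqrt ((1/2 * K)^2) := by
        rw [Real.sqrt_sq (by positivity)]
    _ ≤ Real.sqrt ((y₁ - y₂)^2) := Real.sqrt_le_sqrt h1'
    _ = |y₁ - y₂| := Real.sqrt_sq_eq_abs _
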